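/- arXiv:2208.12887 — 2 statements merged into one kernel-verified Lean document; each statement's English description precedes it below -/
import Mathlib

section
/- Let p be a real number with 1 < p < 2 and let p′ = p/(p−1) be its Hölder conjugate. There exists a constant C > 0 (depending only on p) such that for every pair of compactly supported continuously differentiable functions T, S : ℝ² → ℝ and every measurable vector field u : ℝ² → ℝ² with finite L² norm (with respect to two-dimensional Lebesgue measure), the function x ↦ T(x)·(u(x) · ∇S(x)) is Lebesgue integrable on ℝ² and |∫_{ℝ²} T(x) (u(x) · ∇S(x)) dx| ≤ C · ‖u‖_{L²(ℝ²)} · ‖∇T‖_{L^p(ℝ²)} · ‖∇S‖_{L^{p′}(ℝ²)}. -/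
/-!
The Gagliardo–Nirenberg–Sobolev inequality puts `T` in `L^q` with `q = 2p/(2-p)`, with norm
controlled by `‖∇T‖_{L^p}`. Since `1/q + 1/2 + 1/p' = 1`, Hölder's inequality for three factors
bounds `∫ |T| |u| |∇S|` by `‖T‖_{L^q} ‖u‖_{L^2} ‖∇S‖_{L^{p'}}`.
-/

open MeasureTheory

open scoped ENNReal NNReal InnerProductSpace

section Holder

variable {α E : Type*} [MeasurableSpace α] {μ : Measure α}
  [NormedAddCommGroup E] [InnerProductSpace ℝ E] {p q r t : ℝ≥0∞}
  {T : α → ℝ} {u v : α → E}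

theorem eLpNorm_inner_le [ENNReal.HolderTriple p q r]
    (hu : AEStronglyMeasurable u μ) (hv : AEStronglyMeasurable v μ) :
    eLpNorm (fun x => ⟪u x, v x⟫_ℝ) r μ ≤ eLpNorm u p μ * eLpNorm v q μ := by
  simpa using eLpNorm_le_eLpNorm_mul_eLpNorm_of_nnnorm hu hv (fun a b => ⟪a, b⟫_ℝ) 1
    (.of_forall fun x => by simpa using nnnorm_inner_le_nnnorm (𝕜 := ℝ) (u x) (v x))

theorem eLpNorm_mul_inner_le (hpqr : p⁻¹ + q⁻¹ + r⁻¹ = t⁻¹)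
    (hT : AEStronglyMeasurable T μ) (hu : AEStronglyMeasurable u μ)
    (hv : AEStronglyMeasurable v μ) :
    eLpNorm (fun x => T x * ⟪u x, v x⟫_ℝ) t μ ≤
      eLpNorm T p μ * eLpNorm u q μ * eLpNorm v r μ := by
  have := ENNReal.HolderTriple.of q r
  have : ENNReal.HolderTriple p (q⁻¹ + r⁻¹)⁻¹ t := ⟨by rw [inv_inv, ← add_assoc, hpqr]⟩
  calc eLpNorm (T • fun x => ⟪u x, v x⟫_ℝ) t μ
      ≤ eLpNorm T p μ * eLpNorm (fun x => ⟪u x, v x⟫_ℝ) (q⁻¹ + r⁻¹)⁻¹ μ :=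
        eLpNorm_smul_le_mul_eLpNorm (hu.inner hv) hT
    _ ≤ eLpNorm T p μ * (eLpNorm u q μ * eLpNorm v r μ) :=
        mul_le_mul_right (eLpNorm_inner_le hu hv) _
    _ = _ := (mul_assoc _ _ _).symm

theorem MemLp.integrable_mul_inner (hpqr : p⁻¹ + q⁻¹ + r⁻¹ = 1)
    (hT : MemLp T p μ) (hu : MemLp u q μ) (hv : MemLp v r μ) :
    Integrable (fun x => T x * ⟪u x, v x⟫_ℝ) μ := by
  refine memLp_one_iff_integrable.mp ⟨hT.1.mul (hu.1.inner hv.1), ?_⟩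
  refine (eLpNorm_mul_inner_le (hpqr.trans inv_one.symm) hT.1 hu.1 hv.1).trans_lt ?_
  exact ENNReal.mul_lt_top (ENNReal.mul_lt_top hT.2 hu.2) hv.2

theorem abs_integral_mul_inner_le (hpqr : p⁻¹ + q⁻¹ + r⁻¹ = 1)
    (hT : MemLp T p μ) (hu : MemLp u q μ) (hv : MemLp v r μ) :
    |∫ x, T x * ⟪u x, v x⟫_ℝ ∂μ| ≤
      (eLpNorm T p μ).toReal * (eLpNorm u q μ).toReal * (eLpNorm v r μ).toReal := by
  have hfin : eLpNorm T p μ * eLpNorm u q μ * eLpNorm v r μ ≠ ⊤ :=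
    (ENNReal.mul_lt_top (ENNReal.mul_lt_top hT.2 hu.2) hv.2).ne
  rw [← Real.norm_eq_abs, ← toReal_enorm, ← ENNReal.toReal_mul, ← ENNReal.toReal_mul]
  refine ENNReal.toReal_mono hfin ?_
  calc ‖∫ x, T x * ⟪u x, v x⟫_ℝ ∂μ‖ₑ
      ≤ eLpNorm (fun x => T x * ⟪u x, v x⟫_ℝ) 1 μ := by
        rw [eLpNorm_one_eq_lintegral_enorm]; exact enorm_integral_le_lintegral_enorm _
    _ ≤ _ := eLpNorm_mul_inner_le (hpqr.trans inv_one.symm) hT.1 hu.1 hv.1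

end Holder

section Gradient

variable {E : Type*} [NormedAddCommGroup E] [InnerProductSpace ℝ E] [CompleteSpace E]
  {f : E → ℝ}

theorem eLpNorm_gradient_eq_eLpNorm_fderiv [MeasurableSpace E] (p : ℝ≥0∞) (μ : Measure E) :
    eLpNorm (gradient f) p μ = eLpNorm (fderiv ℝ f) p μ :=
  eLpNorm_congr_norm_ae <| .of_forall fun _ => (InnerProductSpace.toDual ℝ E).symm.norm_map _

theorem ContDiff.continuous_gradient (hf : ContDiff ℝ 1 f) : Continuous (gradient f) :=
  (InnerProductSpace.toDual ℝ E).symm.continuous.comp (hf.continuous_fderiv one_ne_zero)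

theorem HasCompactSupport.gradient (hf : HasCompactSupport f) : HasCompactSupport (gradient f) :=
  (hf.fderiv ℝ).comp_left (map_zero _)

theorem ContDiff.memLp_gradient [MeasurableSpace E] [OpensMeasurableSpace E] {μ : Measure E}
    [IsFiniteMeasureOnCompacts μ] (hf : ContDiff ℝ 1 f) (hfc : HasCompactSupport f)
    (p : ℝ≥0∞) : MemLp (gradient f) p μ :=
  hf.continuous_gradient.memLp_of_hasCompactSupport hfc.gradient

theorem exists_eLpNorm_le_mul_eLpNorm_gradient [FiniteDimensional ℝ E] [MeasurableSpace E]
    [BorelSpace E] (μ : Measure E) [μ.IsAddHaarMeasure] {p : ℝ} (hp : 1 ≤ p)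
    (hpn : p < Module.finrank ℝ E) :
    ∃ C : ℝ≥0, ∀ f : E → ℝ, ContDiff ℝ 1 f → HasCompactSupport f →
      eLpNorm f (ENNReal.ofReal (Module.finrank ℝ E * p / (Module.finrank ℝ E - p))) μ ≤
        C * eLpNorm (gradient f) (ENNReal.ofReal p) μ := by
  have hn : 0 < Module.finrank ℝ E := by
    have : (0 : ℝ) < Module.finrank ℝ E := by linarith
    exact_mod_cast this
  have hq : 0 ≤ Module.finrank ℝ E * p / (Module.finrank ℝ E - p) :=
    div_nonneg (by positivity) (by linarith)
  lift p to ℝ≥0 using by linarith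
  refine ⟨SNormLESNormFDerivOfEqConst ℝ μ p, fun f hf hfc => ?_⟩
  rw [eLpNorm_gradient_eq_eLpNorm_fderiv, ENNReal.ofReal_coe_nnreal]
  refine eLpNorm_le_eLpNorm_fderiv_of_eq μ hf hfc
    (p' := Real.toNNReal (Module.finrank ℝ E * p / (Module.finrank ℝ E - p)))
    (by exact_mod_cast hp) hn ?_
  rw [Real.coe_toNNReal _ hq, NNReal.coe_inv]
  have : (p : ℝ) ≠ 0 := by positivity
  have : (Module.finrank ℝ E : ℝ) - p ≠ 0 := by linarith
  field_simp

end Gradient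

/-- `q = 2p/(2-p)` is the Sobolev exponent of `p` in dimension two. -/
theorem inv_ofReal_sobolev_add_inv_two_add_inv_ofReal_conj {p : ℝ} (hp1 : 1 < p) (hp2 : p < 2) :
    (ENNReal.ofReal (2 * p / (2 - p)))⁻¹ + 2⁻¹ + (ENNReal.ofReal (p / (p - 1)))⁻¹ = 1 := by
  have h2 : (2 : ℝ≥0∞) = ENNReal.ofReal 2 := by norm_num
  rw [h2, ← ENNReal.ofReal_inv_of_pos (by positivity), ← ENNReal.ofReal_inv_of_pos two_pos,
    ← ENNReal.ofReal_inv_of_pos (div_pos (by linarith) (by linarith)),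
    ← ENNReal.ofReal_add (by positivity) (by positivity),
    ← ENNReal.ofReal_add (by positivity) (by positivity), ← ENNReal.ofReal_one]
  have : 2 - p ≠ 0 := by linarith
  have : p - 1 ≠ 0 := by linarith
  have : p ≠ 0 := by linarith
  congr 1
  field_simp
  ring

/-- Bound (3.4) of the paper: the convective trilinear form
`(T, u, S) ↦ ∫ T (u · ∇S)` is well defined and bounded, with bound
`C ‖u‖_{L²} ‖∇T‖_{L^p} ‖∇S‖_{L^{p'}}` where `1 < p < 2` and `p' = p/(p-1)`. -/
theorem convective_term_bound (p : ℝ) (hp1 : 1 < p) (hp2 : p < 2) :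
    ∃ C : ℝ, 0 < C ∧
      ∀ (T S : EuclideanSpace ℝ (Fin 2) → ℝ)
        (u : EuclideanSpace ℝ (Fin 2) → EuclideanSpace ℝ (Fin 2)),
        ContDiff ℝ 1 T → HasCompactSupport T →
        ContDiff ℝ 1 S → HasCompactSupport S →
        Measurable u → eLpNorm u 2 volume < ⊤ →
        Integrable (fun x => T x * (inner ℝ (u x) (gradient S x) : ℝ)) volume ∧
          |∫ x, T x * (inner ℝ (u x) (gradient S x) : ℝ)| ≤
            C * (eLpNorm u 2 volume).toReal *
              (eLpNorm (gradient T) (ENNReal.ofReal p) volume).toReal *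
              (eLpNorm (gradient S) (ENNReal.ofReal (p / (p - 1))) volume).toReal := by
  obtain ⟨C₀, hGNS⟩ := exists_eLpNorm_le_mul_eLpNorm_gradient
    (volume : Measure (EuclideanSpace ℝ (Fin 2))) hp1.le (by simpa using hp2)
  simp only [finrank_euclideanSpace_fin, Nat.cast_ofNat] at hGNS
  refine ⟨C₀ + 1, by positivity, fun T S u hT hTc hS hSc hu hu2 => ?_⟩
  have hexp := inv_ofReal_sobolev_add_inv_two_add_inv_ofReal_conj hp1 hp2
  have hTq : MemLp T (ENNReal.ofReal (2 * p / (2 - p))) volume :=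
    hT.continuous.memLp_of_hasCompactSupport hTc
  have hu : MemLp u 2 volume := ⟨hu.aestronglyMeasurable, hu2⟩
  have hSp' := hS.memLp_gradient hSc (ENNReal.ofReal (p / (p - 1))) (μ := volume)
  refine ⟨MemLp.integrable_mul_inner hexp hTq hu hSp', ?_⟩
  set U := eLpNorm u 2 volume
  set DT := eLpNorm (gradient T) (ENNReal.ofReal p) volume
  set DS := eLpNorm (gradient S) (ENNReal.ofReal (p / (p - 1))) volume
  calc _ ≤ (eLpNorm T (ENNReal.ofReal (2 * p / (2 - p))) volume).toReal * U.toReal * DS.toReal :=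
        abs_integral_mul_inner_le hexp hTq hu hSp'
    _ ≤ (C₀ * DT).toReal * U.toReal * DS.toReal := by
        gcongr
        · exact ENNReal.mul_ne_top ENNReal.coe_ne_top (hT.memLp_gradient hTc _).2.ne
        · exact hGNS T hT hTc
    _ = C₀ * U.toReal * DT.toReal * DS.toReal := by
        rw [ENNReal.toReal_mul, ENNReal.coe_toReal]; ring
    _ ≤ (C₀ + 1) * U.toReal * DT.toReal * DS.toReal := by gcongr; linarith
end

section
/- Let K ⊂ ℝ² be a bounded convex measurable set with Lebesgue measure |K| satisfying 0 < |K| < ∞, let c ∈ K, let p ≥ 1, and let ν₊, ν₊′ > 0. Let ν : ℝ → ℝ be continuously differentiable with |ν(s)| ≤ ν₊ and |ν′(s)| ≤ ν₊′ for all s ∈ ℝ, and let S : ℝ² → ℝ be continuously differentiable. Define ν_h(S) : ℝ² → ℝ by ν_h(S)(x) = (1/|K|) ∫_K ν(S(y)) dy + [ (1/|K|) ∫_K ν′(S(y)) ∇S(y) dy ] · (x − c). Then for every x ∈ K, |ν_h(S)(x)| ≤ ν₊ + ν₊′ · diam(K) · |K|^{−1/p} · ‖∇S‖_{L^p(K)}.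 -/
/-!
Both parts of `ν_h(S)(x) = ⨍_K ν(S) + ⟪⨍_K ν'(S) ∇S, x - c⟫` are averages over `K`. The first is
bounded by `ν₊` because `ν` is. The norm of the second average is at most `ν₊'` times the mean of
`‖∇S‖`, which Hölder's inequality against the constant `1` bounds by `|K|^{-1/p} ‖∇S‖_{L^p(K)}`;
Cauchy–Schwarz and `‖x - c‖ ≤ diam K` finish the estimate.
-/

open MeasureTheory Set

theorem ContDiff.continuous_gradient_s9 {𝕜 F : Type*} [RCLike 𝕜] [NormedAddCommGroup F]
    [InnerProductSpace 𝕜 F] [CompleteSpace F] {f : F → 𝕜} {n : WithTop ℕ∞}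
    (hf : ContDiff 𝕜 n f) (hn : n ≠ 0) : Continuous (gradient f) :=
  (InnerProductSpace.toDual 𝕜 F).symm.continuous.comp (hf.continuous_fderiv hn)

theorem Continuous.memLp_restrict_of_isBounded {X E : Type*} [PseudoMetricSpace X] [ProperSpace X]
    [MeasurableSpace X] [OpensMeasurableSpace X] [NormedAddCommGroup E] {μ : Measure X}
    [IsFiniteMeasureOnCompacts μ] {f : X → E} (hf : Continuous f) {K : Set X}
    (hK : Bornology.IsBounded K) (q : ENNReal) : MemLp f q (μ.restrict K) := by
  have hcl : IsCompact (closure K) := hK.isCompact_closure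
  have : IsFiniteMeasure (μ.restrict (closure K)) :=
    isFiniteMeasure_restrict.2 hcl.measure_lt_top.ne
  obtain ⟨M, hM⟩ := hcl.exists_bound_of_continuousOn hf.continuousOn
  refine MemLp.mono_measure (Measure.restrict_mono subset_closure le_rfl) ?_
  exact .of_bound hf.aestronglyMeasurable M
    ((ae_restrict_iff' isClosed_closure.measurableSet).2 (ae_of_all _ hM))

section Average

variable {α : Type*} [MeasurableSpace α] {μ : Measure α}

theorem norm_average_le_of_norm_le [IsFiniteMeasure μ] {E : Type*} [NormedAddCommGroup E]
    [NormedSpace ℝ E] {f : α → E} {C : ℝ} (hC : 0 ≤ C) (hf : ∀ᵐ x ∂μ, ‖f x‖ ≤ C) :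
    ‖⨍ x, f x ∂μ‖ ≤ C := by
  rw [average_eq, norm_smul, norm_inv, Real.norm_of_nonneg measureReal_nonneg]
  rcases measureReal_nonneg.eq_or_lt with hμ | hμ
  · rwa [← hμ, inv_zero, zero_mul]
  · rw [inv_mul_le_iff₀ hμ, mul_comm]
    exact norm_integral_le_of_norm_le_const hf

theorem norm_average_smul_le [IsFiniteMeasure μ] {E : Type*} [NormedAddCommGroup E]
    [NormedSpace ℝ E] {a : α → ℝ} {f : α → E} {C : ℝ} (ha : ∀ᵐ x ∂μ, |a x| ≤ C)
    (hf : Integrable (fun x ↦ ‖f x‖) μ) :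
    ‖⨍ x, a x • f x ∂μ‖ ≤ C * ⨍ x, ‖f x‖ ∂μ := by
  have hint : ‖∫ x, a x • f x ∂μ‖ ≤ C * ∫ x, ‖f x‖ ∂μ :=
    calc ‖∫ x, a x • f x ∂μ‖ ≤ ∫ x, ‖a x • f x‖ ∂μ := norm_integral_le_integral_norm _
      _ ≤ ∫ x, C * ‖f x‖ ∂μ := by
        refine integral_mono_of_nonneg (ae_of_all _ fun _ ↦ norm_nonneg _) (hf.const_mul C) ?_
        filter_upwards [ha] with x hx
        rw [norm_smul, Real.norm_eq_abs]
        gcongr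
      _ = C * ∫ x, ‖f x‖ ∂μ := integral_const_mul _ _
  rw [average_eq, average_eq, norm_smul, norm_inv, Real.norm_of_nonneg measureReal_nonneg,
    smul_eq_mul, mul_left_comm]
  exact mul_le_mul_of_nonneg_left hint (inv_nonneg.2 measureReal_nonneg)

theorem integral_le_integral_rpow_rpow_mul_measureReal_univ [IsFiniteMeasure μ] {p : ℝ}
    (hp : 1 ≤ p) {g : α → ℝ} (hg0 : 0 ≤ᵐ[μ] g) (hg : MemLp g (ENNReal.ofReal p) μ) :
    ∫ x, g x ∂μ ≤ (∫ x, g x ^ p ∂μ) ^ (1 / p) * μ.real univ ^ (1 - 1 / p) := by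
  rcases hp.eq_or_lt with rfl | hp
  · simp
  have hpq : p.HolderConjugate p.conjExponent := .conjExponent hp
  simpa [hpq.one_sub_inv] using integral_mul_le_Lp_mul_Lq_of_nonneg hpq hg0
    (ae_of_all _ fun _ ↦ zero_le_one) hg (memLp_const 1)

theorem average_le_measureReal_rpow_mul_integral_rpow [IsFiniteMeasure μ] {p : ℝ}
    (hp : 1 ≤ p) {g : α → ℝ} (hg0 : 0 ≤ᵐ[μ] g) (hg : MemLp g (ENNReal.ofReal p) μ) :
    ⨍ x, g x ∂μ ≤ μ.real univ ^ (-(1 / p)) * (∫ x, g x ^ p ∂μ) ^ (1 / p) := by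
  have hV : 0 ≤ μ.real univ := measureReal_nonneg
  have hp0 : 0 < p := zero_lt_one.trans_le hp
  have hpow : (μ.real univ)⁻¹ * μ.real univ ^ (1 - 1 / p) = μ.real univ ^ (-(1 / p)) := by
    have hsum : -1 + (1 - 1 / p) = -(1 / p) := by ring
    rw [← Real.rpow_neg_one, ← Real.rpow_add' hV (by rw [hsum, neg_ne_zero]; positivity), hsum]
  calc ⨍ x, g x ∂μ
      ≤ (μ.real univ)⁻¹ * ((∫ x, g x ^ p ∂μ) ^ (1 / p) * μ.real univ ^ (1 - 1 / p)) := by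
        rw [average_eq, smul_eq_mul]
        gcongr
        exact integral_le_integral_rpow_rpow_mul_measureReal_univ hp hg0 hg
    _ = μ.real univ ^ (-(1 / p)) * (∫ x, g x ^ p ∂μ) ^ (1 / p) := by
        rw [← hpow]; ring

end Average

theorem linear_viscosity_approx_bound_general (K : Set (EuclideanSpace ℝ (Fin 2)))
    (hKb : Bornology.IsBounded K)
    (c : EuclideanSpace ℝ (Fin 2)) (hc : c ∈ K)
    (p : ℝ) (hp : 1 ≤ p)
    (νplus νplus' : ℝ)
    (ν : ℝ → ℝ)
    (hνb : ∀ s : ℝ, |ν s| ≤ νplus) (hν'b : ∀ s : ℝ, |deriv ν s| ≤ νplus')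
    (S : EuclideanSpace ℝ (Fin 2) → ℝ) (hS : ContDiff ℝ 1 S) :
    ∀ x ∈ K,
      |(volume K).toReal⁻¹ * (∫ y in K, ν (S y)) +
          (inner ℝ ((volume K).toReal⁻¹ • ∫ y in K, deriv ν (S y) • gradient S y)
            (x - c) : ℝ)| ≤
        νplus + νplus' * Metric.diam K * (volume K).toReal ^ (-(1 / p)) *
          (∫ y in K, ‖gradient S y‖ ^ p) ^ (1 / p) := by
  intro x hx
  have hνplus' : 0 ≤ νplus' := (abs_nonneg _).trans (hν'b 0)
  have : IsFiniteMeasure (volume.restrict K) := isFiniteMeasure_restrict.2 hKb.measure_lt_top.ne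
  have hgrad (q : ENNReal) : MemLp (fun y ↦ ‖gradient S y‖) q (volume.restrict K) :=
    (hS.continuous_gradient_s9 one_ne_zero).norm.memLp_restrict_of_isBounded hKb q
  have hνS : ‖⨍ y in K, ν (S y)‖ ≤ νplus :=
    norm_average_le_of_norm_le ((abs_nonneg _).trans (hνb 0)) (ae_of_all _ fun y ↦ hνb (S y))
  have hslope : ‖⨍ y in K, deriv ν (S y) • gradient S y‖ ≤
      νplus' * (volume.real K ^ (-(1 / p)) * (∫ y in K, ‖gradient S y‖ ^ p) ^ (1 / p)) := by
    refine (norm_average_smul_le (ae_of_all _ fun y ↦ hν'b (S y))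
      (memLp_one_iff_integrable.1 (hgrad 1))).trans ?_
    gcongr
    simpa only [measureReal_restrict_apply_univ] using
      average_le_measureReal_rpow_mul_integral_rpow hp (ae_of_all _ fun y ↦ norm_nonneg _) (hgrad _)
  have hxc : ‖x - c‖ ≤ Metric.diam K := dist_eq_norm x c ▸ Metric.dist_le_diam_of_mem hKb hx hc
  simp only [setAverage_eq, smul_eq_mul, measureReal_def, Real.norm_eq_abs] at hνS hslope
  calc _ ≤ _ := abs_add_le _ _
    _ ≤ νplus + ‖(volume K).toReal⁻¹ • ∫ y in K, deriv ν (S y) • gradient S y‖ * ‖x - c‖ :=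
        add_le_add hνS (abs_real_inner_le_norm _ _)
    _ ≤ νplus + νplus' * ((volume K).toReal ^ (-(1 / p)) *
          (∫ y in K, ‖gradient S y‖ ^ p) ^ (1 / p)) * Metric.diam K := by
        gcongr
    _ = _ := by ring

/-- Estimate (5.9) of the paper for the elementwise linear approximation `ν_h(S)` of the
composed viscosity `ν(S)`: for every `x` in the (bounded, convex) element `K`,
`|ν_h(S)(x)| ≤ ν₊ + ν₊' · diam(K) · |K|^{-1/p} · ‖∇S‖_{L^p(K)}`. -/
theorem linear_viscosity_approx_bound (K : Set (EuclideanSpace ℝ (Fin 2)))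
    (hKb : Bornology.IsBounded K) (hKc : Convex ℝ K) (hKm : MeasurableSet K)
    (hK0 : 0 < volume K) (hKfin : volume K < ⊤)
    (c : EuclideanSpace ℝ (Fin 2)) (hc : c ∈ K)
    (p : ℝ) (hp : 1 ≤ p)
    (νplus νplus' : ℝ) (hνplus : 0 < νplus) (hνplus' : 0 < νplus')
    (ν : ℝ → ℝ) (hν : ContDiff ℝ 1 ν)
    (hνb : ∀ s : ℝ, |ν s| ≤ νplus) (hν'b : ∀ s : ℝ, |deriv ν s| ≤ νplus')
    (S : EuclideanSpace ℝ (Fin 2) → ℝ) (hS : ContDiff ℝ 1 S) :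
    ∀ x ∈ K,
      |(volume K).toReal⁻¹ * (∫ y in K, ν (S y)) +
          (inner ℝ ((volume K).toReal⁻¹ • ∫ y in K, deriv ν (S y) • gradient S y)
            (x - c) : ℝ)| ≤
        νplus + νplus' * Metric.diam K * (volume K).toReal ^ (-(1 / p)) *
          (∫ y in K, ‖gradient S y‖ ^ p) ^ (1 / p) :=
  linear_viscosity_approx_bound_general K hKb c hc p hp νplus νplus' ν hνb hν'b S hS
end
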